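/- arXiv:2509.10597 — 3 statements merged into one kernel-verified Lean document; each statement's English description precedes it below -/
import Mathlib

section
/- Star-comb lemma: If G is a connected graph and U is an infinite set of vertices of G, then G contains either a comb with all its teeth in U, or a subdivided infinite star with all its leaves in U. -/
open SimpleGraph Set

universe u u2

/-- A ray in `G`: an injective one-way infinite path. -/
def IsRay {V : Type u} (G : SimpleGraph V) (f : ℕ → V) : Prop :=
  Function.Injective f ∧ ∀ n, G.Adj (f n) (f (n + 1))

/-- Two rays are equivalent (belong to the same end) iff for every finite vertex set `F`
there are tails of both rays avoiding `F` that are joined by a walk avoiding `F`. -/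
def RaysEquiv {V : Type u} (G : SimpleGraph V) (R S : ℕ → V) : Prop :=
  ∀ F : Finset V, ∃ m n,
    (∀ i, R (m + i) ∉ F) ∧ (∀ i, S (n + i) ∉ F) ∧
    ∃ p : G.Walk (R m) (S n), ∀ x ∈ p.support, x ∉ F

/-- `G` has a thick end: an infinite family of pairwise disjoint, pairwise equivalent rays. -/
def HasThickEnd {V : Type u} (G : SimpleGraph V) : Prop :=
  ∃ R : ℕ → ℕ → V,
    (∀ n, IsRay G (R n)) ∧
    (∀ m n, m ≠ n → Disjoint (Set.range (R m)) (Set.range (R n))) ∧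
    (∀ m n, RaysEquiv G (R m) (R n))

/-- The hexagonal quarter grid `H^∞`: rows are horizontal rays, with vertical edges
between consecutive rows at alternating positions. -/
def hexGrid : SimpleGraph (ℕ × ℕ) :=
  SimpleGraph.fromRel (fun p q =>
    (p.2 = q.2 ∧ q.1 = p.1 + 1) ∨
    (p.1 = q.1 ∧ q.2 = p.2 + 1 ∧ p.1 % 2 = p.2 % 2))

/-- `H` is a topological minor of `G` (`G` contains a subdivision of `H`):
branch vertices are given by an injection, edges by internally disjoint paths. -/
def IsTopMinor {W : Type u} {V : Type u2} (H : SimpleGraph W) (G : SimpleGraph V) : Prop :=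
  ∃ f : W → V, Function.Injective f ∧
    ∃ P : ∀ ⦃a b : W⦄, H.Adj a b → G.Walk (f a) (f b),
      (∀ ⦃a b : W⦄ (h : H.Adj a b), (P h).IsPath) ∧
      (∀ ⦃a b : W⦄ (h : H.Adj a b) (w : W), f w ∈ (P h).support → w = a ∨ w = b) ∧
      (∀ ⦃a b : W⦄ (h : H.Adj a b) ⦃a' b' : W⦄ (h' : H.Adj a' b'),
        s(a, b) ≠ s(a', b') →
        ∀ x, x ∈ (P h).support → x ∈ (P h').support →
          (x = f a ∨ x = f b) ∧ (x = f a' ∨ x = f b'))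

/-- An `A–B` path: a path meeting `A` exactly in its first vertex and `B` exactly
in its last vertex. -/
def IsABPath {V : Type u} (G : SimpleGraph V) (A B : Set V) {x y : V} (p : G.Walk x y) : Prop :=
  p.IsPath ∧ x ∈ A ∧ y ∈ B ∧
    ∀ z ∈ p.support, (z ∈ A → z = x) ∧ (z ∈ B → z = y)


namespace StarCombAux

noncomputable def chainW {V : Type*} (G : SimpleGraph V) (par : V → V)
    (hpar : ∀ w, G.Adj (par w) w) : (m : ℕ) → (w : V) → G.Walk (par^[m] w) w
  | 0, _ => SimpleGraph.Walk.nil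
  | (m+1), w => (SimpleGraph.Walk.cons (hpar (par^[m] w)) (chainW G par hpar m w)).copy
      (Function.iterate_succ_apply' par m w).symm rfl

lemma chainW_support {V : Type*} (G : SimpleGraph V) (par : V → V)
    (hpar : ∀ w, G.Adj (par w) w) (m : ℕ) (w : V) (x : V) :
    x ∈ (chainW G par hpar m w).support ↔ ∃ i, i ≤ m ∧ x = par^[i] w := by
  induction m with
  | zero => simp [chainW]
  | succ m ih =>
    simp only [chainW, SimpleGraph.Walk.support_copy, SimpleGraph.Walk.support_cons,
      List.mem_cons, ih]
    constructor
    · rintro (rfl | ⟨i, hi, rfl⟩)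
      · exact ⟨m+1, le_rfl, (Function.iterate_succ_apply' par m w).symm⟩
      · exact ⟨i, hi.trans (Nat.le_succ m), rfl⟩
    · rintro ⟨i, hi, rfl⟩
      rcases Nat.lt_or_ge i (m+1) with h | h
      · exact Or.inr ⟨i, Nat.lt_succ_iff.mp h, rfl⟩
      · left
        have : i = m + 1 := le_antisymm hi h
        subst this
        exact (Function.iterate_succ_apply' par m w)

lemma chainW_isPath {V : Type*} (G : SimpleGraph V) (par : V → V)
    (hpar : ∀ w, G.Adj (par w) w) (m : ℕ) (w : V)
    (hinj : ∀ i j, i ≤ m → j ≤ m → par^[i] w = par^[j] w → i = j) :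
    (chainW G par hpar m w).IsPath := by
  induction m with
  | zero => exact SimpleGraph.Walk.IsPath.nil
  | succ m ih =>
    simp only [chainW, SimpleGraph.Walk.isPath_copy, SimpleGraph.Walk.cons_isPath_iff]
    refine ⟨ih (fun i j hi hj h =>
      hinj i j (hi.trans (Nat.le_succ m)) (hj.trans (Nat.le_succ m)) h), ?_⟩
    intro hmem
    rw [chainW_support] at hmem
    obtain ⟨i, hi, hx⟩ := hmem
    have hit : par (par^[m] w) = par^[m+1] w := (Function.iterate_succ_apply' par m w).symm
    rw [hit] at hx
    have := hinj (m+1) i le_rfl (hi.trans (Nat.le_succ m)) hx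
    omega

end StarCombAux

open StarCombAux

/-- Star–comb lemma: a connected graph with an infinite vertex set `U` contains either
a comb with all teeth in `U`, or a subdivided infinite star with all leaves in `U`. -/
theorem star_comb_lemma {V : Type u} (G : SimpleGraph V) (hconn : G.Connected)
    (U : Set V) (hU : U.Infinite) :
    (∃ R : ℕ → V, IsRay G R ∧
      ∃ (a : ℕ → ℕ) (t : ℕ → V) (p : ∀ n, G.Walk (R (a n)) (t n)),
        Function.Injective t ∧ (∀ n, t n ∈ U) ∧ (∀ n, (p n).IsPath) ∧
        (∀ n, ∀ x ∈ (p n).support, (∃ m, x = R m) → x = R (a n)) ∧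
        (∀ m n, m ≠ n → ∀ x, x ∈ (p m).support → x ∉ (p n).support)) ∨
    (∃ (c : V) (l : ℕ → V) (p : ∀ n, G.Walk c (l n)),
        Function.Injective l ∧ (∀ n, l n ∈ U) ∧ (∀ n, l n ≠ c) ∧ (∀ n, (p n).IsPath) ∧
        (∀ m n, m ≠ n → ∀ x, x ∈ (p m).support → x ∈ (p n).support → x = c)) := by
  classical
  obtain ⟨r⟩ := hconn.nonempty
  -- a vertex different from the root
  obtain ⟨w0, hw0U, hw0⟩ : ∃ w, w ∈ U ∧ w ≠ r := by
    obtain ⟨w, hw⟩ := (hU.diff (Set.finite_singleton r)).nonempty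
    exact ⟨w, hw.1, by simpa using hw.2⟩
  -- a neighbour of the root
  have hnbr : ∃ x, G.Adj x r := by
    obtain ⟨q⟩ := hconn.preconnected r w0
    cases q with
    | nil => exact absurd rfl (Ne.symm hw0)
    | cons h _ => exact ⟨_, h.symm⟩
  -- parent along shortest paths
  have hpar_ex : ∀ w, w ≠ r → ∃ x, G.Adj x w ∧ G.dist r x + 1 = G.dist r w := by
    intro w hw
    obtain ⟨q, hq⟩ := hconn.exists_walk_length_eq_dist w r
    cases q with
    | nil => exact absurd rfl hw
    | cons h q' =>
      rename_i y
      refine ⟨y, h.symm, ?_⟩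
      have h1 : G.dist y r ≤ q'.length := SimpleGraph.dist_le q'
      have h2 : G.dist w r ≤ G.dist w y + G.dist y r := hconn.dist_triangle
      have h3 : G.dist w y ≤ 1 := by
        have := SimpleGraph.dist_le (SimpleGraph.Walk.cons h SimpleGraph.Walk.nil)
        simpa using this
      have h4 : (SimpleGraph.Walk.cons h q').length = q'.length + 1 :=
        SimpleGraph.Walk.length_cons _ _
      rw [show G.dist r y = G.dist y r from SimpleGraph.dist_comm,
        show G.dist r w = G.dist w r from SimpleGraph.dist_comm]
      omega
  let par : V → V := fun w => if hw : w = r then Classical.choose hnbr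
    else Classical.choose (hpar_ex w hw)
  have hpar : ∀ w, G.Adj (par w) w := by
    intro w
    by_cases hw : w = r
    · subst hw; simp only [par, dif_pos rfl]; exact Classical.choose_spec hnbr
    · simp only [par, dif_neg hw]; exact (Classical.choose_spec (hpar_ex w hw)).1
  have hpd : ∀ w, w ≠ r → G.dist r (par w) + 1 = G.dist r w := by
    intro w hw
    simp only [par, dif_neg hw]
    exact (Classical.choose_spec (hpar_ex w hw)).2
  have hdep0 : ∀ w : V, G.dist r w = 0 ↔ w = r := by
    intro w; rw [hconn.dist_eq_zero_iff]; exact eq_comm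
  -- depth of iterated parents
  have L1 : ∀ (w : V) (k : ℕ), k ≤ G.dist r w → G.dist r (par^[k] w) = G.dist r w - k := by
    intro w k
    induction k with
    | zero => simp
    | succ k ih =>
      intro hk
      have h1 : G.dist r (par^[k] w) = G.dist r w - k := ih (by omega)
      have hne : par^[k] w ≠ r := by
        intro h
        rw [h] at h1
        simp [SimpleGraph.dist_self] at h1
        omega
      rw [Function.iterate_succ_apply']
      have := hpd _ hne
      omega
  have L2 : ∀ (n : ℕ) (w : V), G.dist r w = n → par^[n] w = r := by
    intro n
    induction n with
    | zero => intro w h; exact (hdep0 w).mp h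
    | succ n ih =>
      intro w h
      have hw : w ≠ r := by intro hw; rw [hw, SimpleGraph.dist_self] at h; omega
      rw [Function.iterate_succ_apply]
      apply ih
      have := hpd w hw
      omega
  -- U-vertices below v
  let D : V → Set V := fun v => {u | u ∈ U ∧ ∃ k, k ≤ G.dist r u ∧ par^[k] u = v}
  have hDr : (D r).Infinite := by
    apply hU.mono
    intro u hu
    exact ⟨hu, G.dist r u, le_rfl, L2 _ u rfl⟩
  -- generic path property
  have hpath : ∀ (u : V) (m : ℕ), m ≤ G.dist r u → (chainW G par hpar m u).IsPath := by
    intro u m hm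
    apply chainW_isPath
    intro i j hi hj hij
    have d1 := L1 u i (hi.trans hm)
    have d2 := L1 u j (hj.trans hm)
    rw [hij] at d1
    omega
  by_cases hstar : ∃ v, (D v).Infinite ∧ ∀ w, par w = v → w ≠ r → (D w).Finite
  · -- STAR case
    right
    obtain ⟨v, hvI, hfin⟩ := hstar
    have hKex : ∀ u : V, ∃ k, (k ≤ G.dist r u ∧ par^[k] u = v) ∨ k = G.dist r u + 1 :=
      fun u => ⟨G.dist r u + 1, Or.inr rfl⟩
    let K : V → ℕ := fun u => Nat.find (hKex u)
    have hKs : ∀ u, (K u ≤ G.dist r u ∧ par^[K u] u = v) ∨ K u = G.dist r u + 1 :=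
      fun u => Nat.find_spec (hKex u)
    have hKle : ∀ u k, k ≤ G.dist r u → par^[k] u = v → K u ≤ k :=
      fun u k h1 h2 => Nat.find_min' (hKex u) (Or.inl ⟨h1, h2⟩)
    have hKm : ∀ u j, j < K u → ¬(j ≤ G.dist r u ∧ par^[j] u = v) :=
      fun u j h hc => Nat.find_min (hKex u) h (Or.inl hc)
    have hKgood : ∀ u, (∃ k, k ≤ G.dist r u ∧ par^[k] u = v) →
        K u ≤ G.dist r u ∧ par^[K u] u = v := by
      intro u ⟨k, hk1, hk2⟩
      rcases hKs u with h | h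
      · exact h
      · have := hKle u k hk1 hk2; omega
    -- the child of v on the chain of u
    let g : V → V := fun u => par^[K u - 1] u
    have hC : ∀ u, (∃ k, k ≤ G.dist r u ∧ par^[k] u = v) → ∀ i, i ≤ K u →
        par^[i] u ≠ v → (∃ k, k ≤ G.dist r (par^[i] u) ∧ par^[k] (par^[i] u) = v) ∧
          g (par^[i] u) = g u := by
      intro u hu i hi hne
      obtain ⟨hK1, hK2⟩ := hKgood u hu
      have hilt : i < K u := lt_of_le_of_ne hi (fun h => hne (h ▸ hK2))
      have hdx : G.dist r (par^[i] u) = G.dist r u - i := L1 u i (hi.trans hK1)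
      have hsub : par^[K u - i] (par^[i] u) = v := by
        rw [← Function.iterate_add_apply, Nat.sub_add_cancel hi]
        exact hK2
      have hle' : K u - i ≤ G.dist r (par^[i] u) := by omega
      refine ⟨⟨K u - i, hle', hsub⟩, ?_⟩
      have h1 : K (par^[i] u) ≤ K u - i := hKle _ _ hle' hsub
      have h2 : ¬ K (par^[i] u) < K u - i := by
        intro hlt
        obtain ⟨hj1, hj2⟩ := hKgood (par^[i] u) ⟨_, hle', hsub⟩
        have hw : par^[K (par^[i] u) + i] u = v := by
          rw [Function.iterate_add_apply]; exact hj2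
        have := hKle u _ (by omega) hw
        omega
      have hKx : K (par^[i] u) = K u - i := by omega
      show par^[K (par^[i] u) - 1] (par^[i] u) = par^[K u - 1] u
      rw [hKx, ← Function.iterate_add_apply]
      congr 1
      omega
    have hgood : ∀ u, u ∈ D v → u ≠ v → par (g u) = v ∧ g u ≠ r ∧ u ∈ D (g u) := by
      intro u hu hune
      obtain ⟨hK1, hK2⟩ := hKgood u hu.2
      have hKpos : 1 ≤ K u := by
        rcases Nat.eq_zero_or_pos (K u) with h | h
        · exfalso; apply hune; rw [h] at hK2; exact hK2
        · exact h
      have h1 : par (g u) = v := by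
        have he : par (par^[K u - 1] u) = par^[(K u - 1) + 1] u :=
          (Function.iterate_succ_apply' par (K u - 1) u).symm
        show par (par^[K u - 1] u) = v
        rw [he, show (K u - 1) + 1 = K u from by omega, hK2]
      have hdg : G.dist r (g u) = G.dist r u - (K u - 1) := L1 u _ (by omega)
      have h2 : g u ≠ r := by
        intro h
        rw [h, SimpleGraph.dist_self] at hdg
        omega
      exact ⟨h1, h2, ⟨hu.1, K u - 1, by omega, rfl⟩⟩
    have hSI : (D v \ {v}).Infinite := hvI.diff (Set.finite_singleton v)
    have hTI : (g '' (D v \ {v})).Infinite := by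
      intro hfinT
      apply hSI
      have hsub : (D v \ {v}) ⊆ ⋃ c ∈ g '' (D v \ {v}), {u | u ∈ D v \ {v} ∧ g u = c} := by
        intro u hu
        exact Set.mem_biUnion (Set.mem_image_of_mem g hu) ⟨hu, rfl⟩
      apply Set.Finite.subset _ hsub
      apply Set.Finite.biUnion hfinT
      intro c hc
      obtain ⟨u, hu, hgu⟩ := hc
      have hg := hgood u hu.1 (by simpa using hu.2)
      rw [hgu] at hg
      apply Set.Finite.subset (hfin c hg.1 hg.2.1)
      intro u' hu'
      have hg' := hgood u' hu'.1.1 (by simpa using hu'.1.2)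
      rw [hu'.2] at hg'
      exact hg'.2.2
    let emb := Set.Infinite.natEmbedding _ hTI
    let f : ℕ → V := fun n => (emb n : V)
    have hfinj : Function.Injective f :=
      fun a b h => emb.injective (Subtype.ext h)
    have hfmem : ∀ n, f n ∈ g '' (D v \ {v}) := fun n => (emb n).2
    have hex : ∀ n, ∃ u, u ∈ D v \ {v} ∧ g u = f n := by
      intro n
      obtain ⟨u, hu, hgu⟩ := hfmem n
      exact ⟨u, hu, hgu⟩
    choose l hl1 hl2 using hex
    have hlD : ∀ n, l n ∈ D v := fun n => (hl1 n).1
    have hlne : ∀ n, l n ≠ v := fun n => by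
      have := (hl1 n).2; simpa using this
    have hKwalk : ∀ n, par^[K (l n)] (l n) = v := fun n => (hKgood _ (hlD n).2).2
    refine ⟨v, l, fun n => (chainW G par hpar (K (l n)) (l n)).copy (hKwalk n) rfl,
      ?_, ?_, ?_, ?_, ?_⟩
    · intro a b h
      apply hfinj
      rw [← hl2 a, ← hl2 b, h]
    · exact fun n => (hlD n).1
    · exact hlne
    · intro n
      rw [SimpleGraph.Walk.isPath_copy]
      exact hpath _ _ (hKgood _ (hlD n).2).1
    · intro m n hmn x hxm hxn
      rw [SimpleGraph.Walk.support_copy, chainW_support] at hxm hxn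
      obtain ⟨i, hi, rfl⟩ := hxm
      obtain ⟨j, hj, hx⟩ := hxn
      by_contra hxv
      have h1 := (hC (l m) (hlD m).2 i hi hxv).2
      have h2 := (hC (l n) (hlD n).2 j hj (by rw [← hx]; exact hxv)).2
      rw [← hx] at h2
      rw [h2] at h1
      have : f m = f n := by rw [← hl2 m, ← hl2 n, h1]
      exact hmn (hfinj this)
  · -- RAY case
    left
    push_neg at hstar
    have hstep : ∀ v, (D v).Infinite → ∃ w, par w = v ∧ w ≠ r ∧ (D w).Infinite := by
      intro v hv
      obtain ⟨w, hw1, hw2, hw3⟩ := hstar v hv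
      exact ⟨w, hw1, hw2, hw3⟩
    choose nxt hn1 hn2 hn3 using hstep
    let F : ℕ → {x : V // (D x).Infinite} := fun n =>
      Nat.rec ⟨r, hDr⟩ (fun _ p => ⟨nxt p.1 p.2, hn3 p.1 p.2⟩) n
    let R : ℕ → V := fun n => (F n).1
    have hR0 : R 0 = r := rfl
    have hRD : ∀ n, (D (R n)).Infinite := fun n => (F n).2
    have hRs : ∀ n, par (R (n+1)) = R n ∧ R (n+1) ≠ r :=
      fun n => ⟨hn1 (F n).1 (F n).2, hn2 (F n).1 (F n).2⟩
    have hdepR : ∀ n, G.dist r (R n) = n := by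
      intro n
      induction n with
      | zero => rw [hR0]; exact SimpleGraph.dist_self
      | succ n ih =>
        have := hpd (R (n+1)) (hRs n).2
        rw [(hRs n).1, ih] at this
        omega
    have hRinj : Function.Injective R := by
      intro a b h
      have ha := hdepR a
      rw [h, hdepR b] at ha
      exact ha.symm
    have hRadj : ∀ n, G.Adj (R n) (R (n+1)) := by
      intro n
      have := hpar (R (n+1))
      rwa [(hRs n).1] at this
    have hancR : ∀ i j, i ≤ j → par^[i] (R j) = R (j - i) := by
      intro i
      induction i with
      | zero => simp
      | succ i ih =>
        intro j h
        rw [Function.iterate_succ_apply', ih j (by omega)]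
        have he : j - i = (j - (i+1)) + 1 := by omega
        rw [he, (hRs _).1]
    have hfKex : ∀ x : V, ∃ k, k ≤ G.dist r x ∧ ∃ m, par^[k] x = R m :=
      fun x => ⟨G.dist r x, le_rfl, 0, by rw [L2 _ x rfl, hR0]⟩
    let fK : V → ℕ := fun x => Nat.find (hfKex x)
    have hfKs : ∀ x, fK x ≤ G.dist r x ∧ ∃ m, par^[fK x] x = R m :=
      fun x => Nat.find_spec (hfKex x)
    have hfKle : ∀ x k, k ≤ G.dist r x → (∃ m, par^[k] x = R m) → fK x ≤ k :=
      fun x k h1 h2 => Nat.find_min' (hfKex x) ⟨h1, h2⟩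
    have hfKm : ∀ x j, j < fK x → ¬(j ≤ G.dist r x ∧ ∃ m, par^[j] x = R m) :=
      fun x j h => Nat.find_min (hfKex x) h
    let J : V → ℕ := fun x => Classical.choose (hfKs x).2
    have hJ : ∀ x, par^[fK x] x = R (J x) := fun x => Classical.choose_spec (hfKs x).2
    -- suffix claim
    have hC2 : ∀ u i, i ≤ fK u → fK (par^[i] u) = fK u - i ∧ J (par^[i] u) = J u := by
      intro u i hi
      have hdx : G.dist r (par^[i] u) = G.dist r u - i := L1 u i (hi.trans (hfKs u).1)
      have hsub : par^[fK u - i] (par^[i] u) = R (J u) := by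
        rw [← Function.iterate_add_apply, Nat.sub_add_cancel hi]
        exact hJ u
      have hle : fK u - i ≤ G.dist r (par^[i] u) := by
        have := (hfKs u).1; omega
      have h1 : fK (par^[i] u) ≤ fK u - i := hfKle _ _ hle ⟨J u, hsub⟩
      have h2 : ¬ fK (par^[i] u) < fK u - i := by
        intro hlt
        obtain ⟨hfx1, m, hfx2⟩ := hfKs (par^[i] u)
        have hw : par^[fK (par^[i] u) + i] u = R m := by
          rw [Function.iterate_add_apply]; exact hfx2
        exact hfKm u (fK (par^[i] u) + i) (by omega) ⟨by omega, m, hw⟩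
      have hfKx : fK (par^[i] u) = fK u - i := by omega
      refine ⟨hfKx, ?_⟩
      have hJx := hJ (par^[i] u)
      rw [hfKx, hsub] at hJx
      exact (hRinj hJx).symm
    -- descendants of R m' have first-ray index at least m'
    have hC3 : ∀ u m', u ∈ D (R m') → m' ≤ J u := by
      intro u m' hu
      obtain ⟨_, k, hk1, hk2⟩ := hu
      have h1 : fK u ≤ k := hfKle u k hk1 ⟨m', hk2⟩
      have h2 : par^[k - fK u] (R (J u)) = R m' := by
        rw [← hJ u, ← Function.iterate_add_apply, Nat.sub_add_cancel h1]
        exact hk2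
      have h3 : k - fK u ≤ J u := by
        have hd1 := hdepR (J u)
        have hd2 : G.dist r (R (J u)) = G.dist r u - fK u := by
          rw [← hJ u]; exact L1 u _ (hfKs u).1
        omega
      rw [hancR _ _ h3] at h2
      have := hRinj h2
      omega
    have hsel : ∀ m, ∃ u, u ∈ D (R m) := fun m => (hRD m).nonempty
    choose sel hselm using hsel
    let b : ℕ → ℕ := fun n => Nat.rec 0 (fun _ bn => J (sel bn) + 1) n
    let t : ℕ → V := fun n => sel (b n)
    let a : ℕ → ℕ := fun n => J (t n)
    have hb : ∀ n, b (n+1) = a n + 1 := fun n => rfl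
    have haJ : ∀ n, b n ≤ a n := fun n => hC3 (t n) (b n) (hselm (b n))
    have halt : ∀ n, a n < a (n+1) := by
      intro n
      have h1 := haJ (n+1)
      rw [hb n] at h1
      omega
    have hamono : StrictMono a := strictMono_nat_of_lt_succ halt
    have hainj : Function.Injective a := hamono.injective
    have hwalk : ∀ n, par^[fK (t n)] (t n) = R (a n) := fun n => hJ (t n)
    refine ⟨R, ⟨hRinj, hRadj⟩, a, t,
      fun n => (chainW G par hpar (fK (t n)) (t n)).copy (hwalk n) rfl, ?_, ?_, ?_, ?_, ?_⟩
    · intro m n h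
      apply hainj
      show J (t m) = J (t n)
      rw [h]
    · exact fun n => (hselm (b n)).1
    · intro n
      rw [SimpleGraph.Walk.isPath_copy]
      exact hpath _ _ (hfKs (t n)).1
    · intro n x hx hm
      rw [SimpleGraph.Walk.support_copy, chainW_support] at hx
      obtain ⟨i, hi, rfl⟩ := hx
      obtain ⟨m, hm⟩ := hm
      have hik : fK (t n) ≤ i := by
        by_contra hlt
        exact hfKm (t n) i (by omega)
          ⟨hi.trans (hfKs (t n)).1, m, hm⟩
      have : i = fK (t n) := le_antisymm hi hik
      rw [this, hwalk n]
    · intro m n hmn x hxm hxn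
      rw [SimpleGraph.Walk.support_copy, chainW_support] at hxm hxn
      obtain ⟨i, hi, rfl⟩ := hxm
      obtain ⟨j, hj, hx⟩ := hxn
      have h1 := (hC2 (t m) i hi).2
      have h2 := (hC2 (t n) j hj).2
      rw [← hx] at h2
      rw [h2] at h1
      exact hmn ((hainj (show a n = a m from h1)).symm)
end

section
/- All rays in the hexagonal quarter grid H^∞ are equivalent; in particular, H^∞ has exactly one end, and this end is thick. -/
open SimpleGraph Set

universe u u2

lemma hexAdjH (x y : ℕ) : hexGrid.Adj (x, y) (x + 1, y) := by
  refine ⟨by simp, Or.inl (Or.inl ⟨rfl, rfl⟩)⟩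

lemma hexAdjV (x y : ℕ) (h : x % 2 = y % 2) : hexGrid.Adj (x, y) (x, y + 1) := by
  refine ⟨by simp, Or.inl (Or.inr ⟨rfl, rfl, h⟩)⟩

def rightW (y : ℕ) : (x n : ℕ) → hexGrid.Walk (x, y) (x + n, y)
  | _, 0 => Walk.nil
  | x, n + 1 => Walk.cons (hexAdjH x y)
      ((rightW y (x + 1) n).copy rfl (by rw [show x + 1 + n = x + (n + 1) from by omega]))

lemma rightW_support (y : ℕ) : ∀ x n, ∀ z ∈ (rightW y x n).support,
    z.2 = y ∧ x ≤ z.1 ∧ z.1 ≤ x + n := by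
  intro x n
  induction n generalizing x with
  | zero => intro z hz; simp [rightW] at hz; subst hz; simp
  | succ n ih =>
    intro z hz
    simp only [rightW, Walk.support_cons, Walk.support_copy, List.mem_cons] at hz
    rcases hz with rfl | hz
    · simp
    · have := ih (x + 1) z hz
      exact ⟨this.1, by omega, by omega⟩

def downW : (y x : ℕ) → Σ x', hexGrid.Walk (x, y) (x', 0)
  | 0, x => ⟨x, Walk.nil⟩
  | y + 1, x =>
    if h : x % 2 = y % 2 then
      ⟨(downW y x).1, Walk.cons (hexAdjV x y h).symm (downW y x).2⟩
    else
      ⟨(downW y (x + 1)).1, Walk.cons (hexAdjH x (y + 1))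
        (Walk.cons (hexAdjV (x + 1) y (by omega)).symm (downW y (x + 1)).2)⟩

lemma downW_support (y : ℕ) : ∀ x, ∀ z ∈ (downW y x).2.support, x ≤ z.1 := by
  induction y with
  | zero => intro x z hz; simp [downW] at hz; subst hz; simp
  | succ y ih =>
    intro x z hz
    by_cases h : x % 2 = y % 2
    · rw [downW, dif_pos h] at hz
      simp only [Walk.support_cons, List.mem_cons] at hz
      rcases hz with rfl | hz
      · simp
      · exact ih x z hz
    · rw [downW, dif_neg h] at hz
      simp only [Walk.support_cons, List.mem_cons] at hz
      rcases hz with rfl | rfl | hz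
      · simp
      · simp
      · have := ih (x + 1) z hz; omega

def botW (a b : ℕ) : hexGrid.Walk (a, 0) (b, 0) :=
  if h : a ≤ b then (rightW 0 a (b - a)).copy rfl (by rw [Nat.add_sub_cancel' h])
  else ((rightW 0 b (a - b)).copy rfl
      (by rw [Nat.add_sub_cancel' (Nat.le_of_not_le h)])).reverse

lemma botW_support (a b : ℕ) : ∀ z ∈ (botW a b).support, z.2 = 0 ∧ min a b ≤ z.1 := by
  intro z hz
  unfold botW at hz
  split_ifs at hz with h
  · simp only [Walk.support_copy] at hz
    have := rightW_support 0 a (b - a) z hz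
    exact ⟨this.1, by omega⟩
  · simp only [Walk.support_reverse, Walk.support_copy, List.mem_reverse] at hz
    have := rightW_support 0 b (a - b) z hz
    exact ⟨this.1, by omega⟩

lemma escape (B : ℕ) (p : ℕ × ℕ) (hp : B ≤ p.1 ∨ B ≤ p.2) :
    ∃ a, B ≤ a ∧ ∃ w : hexGrid.Walk p (a, 0), ∀ z ∈ w.support, B ≤ z.1 ∨ B ≤ z.2 := by
  set x1 := p.1 + (B - p.1) with hx1
  have hx1B : B ≤ x1 := by omega
  refine ⟨(downW p.2 x1).1, ?_, (rightW p.2 p.1 (B - p.1)).append (downW p.2 x1).2, ?_⟩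
  · have := downW_support p.2 x1 ((downW p.2 x1).1, 0) (by simp [Walk.end_mem_support])
    simpa using le_trans hx1B this
  · intro z hz
    rw [Walk.mem_support_append_iff] at hz
    rcases hz with hz | hz
    · have := rightW_support p.2 p.1 (B - p.1) z hz
      rcases hp with hp | hp
      · left; omega
      · right; omega
    · left; exact le_trans hx1B (downW_support p.2 x1 z hz)

lemma allRaysEquiv (R S : ℕ → ℕ × ℕ) (hR : IsRay hexGrid R) (hS : IsRay hexGrid S) :
    RaysEquiv hexGrid R S := by
  intro F
  set B := (F.sup fun v => max v.1 v.2) + 1 with hB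
  have hFB : ∀ v ∈ F, v.1 < B ∧ v.2 < B := by
    intro v hv
    have h1 := Finset.le_sup (f := fun v : ℕ × ℕ => max v.1 v.2) hv
    have h2 := le_trans (le_max_left v.1 v.2) h1
    have h3 := le_trans (le_max_right v.1 v.2) h1
    omega
  have hfin : ∀ T : ℕ → ℕ × ℕ, Function.Injective T →
      ∃ m : ℕ, ∀ k, m ≤ k → B ≤ (T k).1 ∨ B ≤ (T k).2 := by
    intro T hT
    have hpre : (T ⁻¹' ↑(Finset.range B ×ˢ Finset.range B)).Finite :=
      (Finset.finite_toSet _).preimage hT.injOn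
    obtain ⟨c, hc⟩ := hpre.bddAbove
    refine ⟨c + 1, fun k hk => ?_⟩
    by_contra hcon
    push_neg at hcon
    have hkmem : k ∈ T ⁻¹' ↑(Finset.range B ×ˢ Finset.range B) := by
      simp only [Set.mem_preimage, Finset.coe_product, Set.mem_prod, Finset.mem_coe,
        Finset.mem_range]
      omega
    have := hc hkmem
    omega
  obtain ⟨m, hm⟩ := hfin R hR.1
  obtain ⟨n, hn⟩ := hfin S hS.1
  refine ⟨m, n, ?_, ?_, ?_⟩
  · intro i hmem
    have h1 := hFB _ hmem
    have h2 := hm (m + i) (by omega)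
    omega
  · intro i hmem
    have h1 := hFB _ hmem
    have h2 := hn (n + i) (by omega)
    omega
  · obtain ⟨a, ha, wR, hwR⟩ := escape B (R m) (hm m le_rfl)
    obtain ⟨b, hb, wS, hwS⟩ := escape B (S n) (hn n le_rfl)
    refine ⟨wR.append ((botW a b).append wS.reverse), ?_⟩
    intro z hz
    suffices h : B ≤ z.1 ∨ B ≤ z.2 by
      intro hmem
      have := hFB z hmem
      omega
    rw [Walk.mem_support_append_iff] at hz
    rcases hz with hz | hz
    · exact hwR z hz
    · rw [Walk.mem_support_append_iff] at hz
      rcases hz with hz | hz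
      · have := botW_support a b z hz
        left; omega
      · rw [Walk.support_reverse, List.mem_reverse] at hz
        exact hwS z hz

lemma rowRay (n : ℕ) : IsRay hexGrid (fun k => (k, n)) := by
  constructor
  · intro a b h
    simpa using h
  · intro k
    exact hexAdjH k n

/-- All rays in the hexagonal quarter grid are equivalent; in particular it has rays
(hence exactly one end), and this end is thick. -/
theorem hexGrid_one_thick_end :
    (∀ R S : ℕ → ℕ × ℕ, IsRay hexGrid R → IsRay hexGrid S → RaysEquiv hexGrid R S) ∧
    (∃ R : ℕ → ℕ × ℕ, IsRay hexGrid R) ∧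
    HasThickEnd hexGrid := by
  refine ⟨allRaysEquiv, ⟨fun k => (k, 0), rowRay 0⟩, fun n k => (k, n), fun n => rowRay n, ?_, fun m n => allRaysEquiv _ _ (rowRay m) (rowRay n)⟩
  intro m n hmn
  rw [Set.disjoint_left]
  rintro x ⟨a, rfl⟩ ⟨b, hb⟩
  have h2 : n = m := congrArg Prod.snd hb
  exact hmn h2.symm
end

section
/- In a comb, the ray of the comb is equivalent to any ray that contains infinitely many teeth of the comb, provided both rays lie in the same graph and the comb's paths connect them. -/
open SimpleGraph Set

universe u u2

/-- The spine of a comb is equivalent to any ray containing infinitely many of its teeth. -/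
theorem comb_spine_equiv {V : Type u} (G : SimpleGraph V)
    (R : ℕ → V) (hR : IsRay G R)
    (a : ℕ → ℕ) (t : ℕ → V) (p : ∀ n, G.Walk (R (a n)) (t n))
    (hpath : ∀ n, (p n).IsPath)
    (honR : ∀ n, ∀ x ∈ (p n).support, (∃ m, x = R m) → x = R (a n))
    (hdisj : ∀ m n, m ≠ n → ∀ x, x ∈ (p m).support → x ∉ (p n).support)
    (S : ℕ → V) (hS : IsRay G S)
    (hteeth : {n | ∃ i, S i = t n}.Infinite) :
    RaysEquiv G R S := by
  intro F
  classical
  have hainj : Function.Injective a := by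
    intro m n h
    by_contra hmn
    refine hdisj m n hmn (R (a m)) ((p m).start_mem_support) ?_
    rw [h]
    exact (p n).start_mem_support
  have htinj : Function.Injective t := by
    intro m n h
    by_contra hmn
    refine hdisj m n hmn (t m) ((p m).end_mem_support) ?_
    rw [h]
    exact (p n).end_mem_support
  have hRfin : {k | R k ∈ F}.Finite :=
    Set.Finite.preimage hR.1.injOn F.finite_toSet
  obtain ⟨m0, hm0⟩ := hRfin.bddAbove
  have hSfin : {k | S k ∈ F}.Finite :=
    Set.Finite.preimage hS.1.injOn F.finite_toSet
  obtain ⟨n0, hn0⟩ := hSfin.bddAbove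
  have hBad1 : {n | a n ≤ m0}.Finite := (Set.finite_Iic m0).preimage hainj.injOn
  have hBad2 : {n | ∃ k ≤ n0, S k = t n}.Finite := by
    refine (((Set.finite_Iic n0).image S).preimage htinj.injOn).subset ?_
    rintro n ⟨k, hk, hkn⟩
    exact ⟨k, hk, hkn⟩
  have hBad3 : {n | ∃ x ∈ (p n).support, x ∈ F}.Finite := by
    have hsub : {n | ∃ x ∈ (p n).support, x ∈ F} ⊆
        ⋃ x ∈ (F : Set V), {n | x ∈ (p n).support} := by
      rintro n ⟨x, hx, hxF⟩
      exact Set.mem_biUnion hxF hx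
    refine (Set.Finite.biUnion F.finite_toSet ?_).subset hsub
    intro x _
    apply Set.Subsingleton.finite
    intro m hm n hn
    by_contra hmn
    exact hdisj m n hmn x hm hn
  have hT : ({n | ∃ i, S i = t n} \ ({n | a n ≤ m0} ∪ {n | ∃ k ≤ n0, S k = t n}
      ∪ {n | ∃ x ∈ (p n).support, x ∈ F})).Infinite :=
    hteeth.diff ((hBad1.union hBad2).union hBad3)
  obtain ⟨n, hn⟩ := hT.nonempty
  obtain ⟨⟨i, hi⟩, hnbad⟩ := hn
  simp only [Set.mem_union, Set.mem_setOf_eq, not_or] at hnbad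
  obtain ⟨⟨hb1, hb2⟩, hb3⟩ := hnbad
  refine ⟨a n, i, ?_, ?_, ?_⟩
  · intro j hmem
    have := hm0 hmem
    omega
  · intro j hmem
    have h1 := hn0 hmem
    exact hb2 ⟨i, by omega, hi⟩
  · refine ⟨(p n).copy rfl hi.symm, ?_⟩
    intro x hx hxF
    rw [SimpleGraph.Walk.support_copy] at hx
    exact hb3 ⟨x, hx, hxF⟩
end
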